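/- Let A be a non-singular by columns (NSC) s×h matrix over F_q with s ≤ h, and let C_1,…,C_s be linear codes in F_q^m, each a nonzero proper subspace of F_q^m. Let C = [C_1,…,C_s]·A. Then the minimum distance of the Euclidean dual of C satisfies d(C^{⊥E}) ≥ min{ s + 1, s·d(C_s^{⊥E}), (s−1)·d(C_{s−1}^{⊥E}), …, d(C_1^{⊥E}) }. -/

import Mathlib

/-- Minimum distance (minimum Hamming weight of a nonzero element) of a set of vectors. -/
noncomputable def dminS {F : Type*} [DecidableEq F] [Zero F] {n : Type*} [Fintype n]
    (C : Set (n → F)) : ℕ :=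
  sInf { w | ∃ c ∈ C, c ≠ 0 ∧ hammingNorm c = w }

/-- Euclidean dual of a set of vectors. -/
def dualE {F : Type*} [Field F] {n : Type*} [Fintype n] (C : Set (n → F)) : Set (n → F) :=
  { x | ∀ c ∈ C, ∑ j, x j * c j = 0 }

/-- Hermitian dual (with respect to x ↦ x^q) of a set of vectors over F_{q^2}. -/
def dualH {F : Type*} [Field F] {n : Type*} [Fintype n] (q : ℕ) (C : Set (n → F)) :
    Set (n → F) :=
  { x | ∀ c ∈ C, ∑ j, x j * (c j) ^ q = 0 }

/-- The matrix-product code `[C_1,…,C_s]·A` as a set of vectors indexed by `Fin h × Fin m`. -/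
def mpcSet {F : Type*} [Field F] {s h m : ℕ}
    (C : Fin s → Set (Fin m → F)) (A : Matrix (Fin s) (Fin h) F) :
    Set (Fin h × Fin m → F) :=
  { p | ∃ v : Fin s → Fin m → F, (∀ i, v i ∈ C i) ∧ ∀ x, p x = ∑ i, A i x.1 * v i x.2 }

/-- A matrix is non-singular by columns. -/
def IsNSC {F : Type*} [Field F] {s h : ℕ} (A : Matrix (Fin s) (Fin h) F) : Prop :=
  ∀ (i : ℕ) (hi : i ≤ s), 0 < i → ∀ c : Fin i → Fin h, StrictMono c →
    (Matrix.of fun r t : Fin i => A (Fin.castLE hi r) (c t)).det ≠ 0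

/-- Punctured code: projection of `C` onto the coordinates in `R`. -/
def punct {F : Type*} {n : Type*} (C : Set (n → F)) (R : Finset n) :
    Set ({x // x ∈ R} → F) :=
  (fun c (t : {x // x ∈ R}) => c t.1) '' C

/-- `R` is an (r,δ)-extended recovery set for coordinate `i` of the code `C`. -/
def IsRecSet {F : Type*} [DecidableEq F] [Zero F] {n : Type*} [Fintype n]
    (C : Set (n → F)) (r δ : ℕ) (i : n) (R : Finset n) : Prop :=
  i ∈ R ∧ R.card ≤ r + δ - 1 ∧ δ ≤ dminS (punct C R)

/-- `C` is a locally recoverable code with locality (r,δ). -/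
def IsLRC {F : Type*} [DecidableEq F] [Zero F] {n : Type*} [Fintype n]
    (C : Set (n → F)) (r δ : ℕ) : Prop :=
  ∀ i : n, ∃ R : Finset n, IsRecSet C r δ i R

/-- `wv α i` is the evaluation of the monomial `X^(i-1)` at all points of the field,
enumerated by `α`. -/
def wv {F : Type*} [Field F] {q : ℕ} (α : Fin q ≃ F) (i : ℕ) : Fin q → F :=
  fun j => (α j) ^ (i - 1)

/-- `av α p i` : the vectors `a_i`, with `a_i = w_i` for `i < q` and
`a_q = w_q + ((p-1)/2) • w_1`. -/
def av {F : Type*} [Field F] {q : ℕ} (α : Fin q ≃ F) (p : ℕ) (i : ℕ) : Fin q → F :=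
  if i = q then wv α q + (((p - 1) / 2 : ℕ) : F) • wv α 1 else wv α i

/-- The square matrix whose rows are `a_1, …, a_q`. -/
def Adot {F : Type*} [Field F] {q : ℕ} (α : Fin q ≃ F) (p : ℕ) : Matrix (Fin q) (Fin q) F :=
  Matrix.of fun r j => av α p ((r : ℕ) + 1) j

/-! If `x` lies in the dual of `[C_1,…,C_s]·A`, then `y_i := Σ_k a_{ik} x_{k,·}` lies in
`C_i^⊥`, and column `l` of `(y_i)_i` is `A` applied to column `l` of `x`. Let `j` be the first
index with `y_j ≠ 0`. Every nonzero column of `x` is annihilated by the first `j - 1` rows of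
`A`, so by the NSC property it has weight at least `j`; and `x` has at least `d(C_j^⊥)` nonzero
columns, namely those where `y_j` does not vanish. If all `y_i` vanish, a nonzero column is
annihilated by all `s` rows and has weight at least `s + 1`.

The minimum is attained because the dual is nonzero: as `s ≤ h`, some `g ≠ 0` is orthogonal to
all rows of `A` but the first, and `g ⊗ z` is in the dual for any `z ∈ C_1^⊥`. -/

section MatrixProductCode

open Matrix Finset

section Hamming

variable {ι κ β : Type*} [Fintype ι] [Fintype κ] [DecidableEq β] [Zero β]

lemma hammingNorm_eq_sum_hammingNorm_col (x : ι × κ → β) :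
    hammingNorm x = ∑ l, hammingNorm fun k => x (k, l) := by
  simp only [hammingNorm, card_filter]
  rw [Fintype.sum_prod_type, sum_comm]

lemma mul_card_le_hammingNorm {x : ι × κ → β} {S : Finset κ} {r : ℕ}
    (hS : ∀ l ∈ S, r ≤ hammingNorm fun k => x (k, l)) :
    r * #S ≤ hammingNorm x :=
  calc r * #S = ∑ _l ∈ S, r := by rw [sum_const, smul_eq_mul, mul_comm]
    _ ≤ ∑ l ∈ S, hammingNorm fun k => x (k, l) := sum_le_sum hS
    _ ≤ ∑ l, hammingNorm fun k => x (k, l) := sum_le_sum_of_subset (subset_univ S)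
    _ = hammingNorm x := (hammingNorm_eq_sum_hammingNorm_col x).symm

end Hamming

section MinimumDistance

variable {F n : Type*} [DecidableEq F] [Zero F] [Fintype n] {D : Set (n → F)}

lemma dminS_le_hammingNorm {c : n → F} (hc : c ∈ D) (hc0 : c ≠ 0) :
    dminS D ≤ hammingNorm c :=
  Nat.sInf_le ⟨c, hc, hc0, rfl⟩

lemma exists_hammingNorm_eq_dminS (hD : ∃ c ∈ D, c ≠ 0) :
    ∃ c ∈ D, c ≠ 0 ∧ hammingNorm c = dminS D := by
  obtain ⟨c, hc, hc0⟩ := hD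
  exact Nat.sInf_mem (s := {w | ∃ c ∈ D, c ≠ 0 ∧ hammingNorm c = w})
    ⟨_, c, hc, hc0, rfl⟩

end MinimumDistance

lemma exists_mem_dualE_ne_zero {F n : Type*} [Field F] [Fintype n]
    {C : Submodule F (n → F)} (hC : C ≠ ⊤) :
    ∃ z ∈ dualE (C : Set (n → F)), z ≠ 0 := by
  classical
  obtain ⟨f, hf, hCf⟩ := C.exists_dual_map_eq_bot_of_lt_top hC.lt_top inferInstance
  refine ⟨(dotProductEquiv F n).symm f, fun c hc => ?_, by simpa using hf⟩
  have hfc : f c = 0 := (Submodule.mem_bot F).mp (hCf ▸ Submodule.mem_map_of_mem hc)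
  calc ∑ j, (dotProductEquiv F n).symm f j * c j
      = dotProductEquiv F n ((dotProductEquiv F n).symm f) c := rfl
    _ = 0 := by rw [LinearEquiv.apply_symm_apply, hfc]

lemma Matrix.exists_ne_zero_mulVec_apply_eq_zero_of_ne {F ι κ : Type*} [Field F]
    [Fintype ι] [Fintype κ] (A : Matrix ι κ F) (hcard : Fintype.card ι ≤ Fintype.card κ)
    (i₀ : ι) :
    ∃ g : κ → F, g ≠ 0 ∧ ∀ i ≠ i₀, (A *ᵥ g) i = 0 := by
  classical
  let B : Matrix {i // i ≠ i₀} κ F := A.submatrix Subtype.val id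
  have hker : LinearMap.ker B.mulVecLin ≠ ⊥ := by
    apply LinearMap.ker_ne_bot_of_finrank_lt
    simp only [ne_eq, Module.finrank_fintype_fun_eq_card, Fintype.card_subtype_compl,
      Fintype.card_unique]
    have := Fintype.card_pos_iff.mpr ⟨i₀⟩
    omega
  obtain ⟨g, hg, hg0⟩ := Submodule.ne_bot_iff _ |>.mp hker
  exact ⟨g, hg0, fun i hi => congrFun hg ⟨i, hi⟩⟩

variable {F : Type*} [Field F] {s h m : ℕ}

lemma IsNSC.lt_hammingNorm [DecidableEq F] {A : Matrix (Fin s) (Fin h) F} (hA : IsNSC A)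
    {r : ℕ} (hr : r ≤ s) {u : Fin h → F} (hu : u ≠ 0)
    (hAu : ∀ i : Fin s, (i : ℕ) < r → (A *ᵥ u) i = 0) : r < hammingNorm u := by
  by_contra! hwt
  set K : Finset (Fin h) := {k | u k ≠ 0}
  have htr : #K ≤ r := hwt
  have ht : 0 < #K := hammingNorm_pos_iff.mpr hu
  let c := K.orderEmbOfFin rfl
  have hdet := hA #K (htr.trans hr) ht c c.strictMono
  have hker : (Matrix.of fun a b : Fin #K => A (Fin.castLE (htr.trans hr) a) (c b)) *ᵥ (u ∘ c)
      = 0 := by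
    funext a
    calc ∑ b, A (Fin.castLE (htr.trans hr) a) (c b) * u (c b)
        = (A *ᵥ u) (Fin.castLE (htr.trans hr) a) := by
          refine Fintype.sum_of_injective c c.injective _ _ (fun k hk => ?_) fun _ => rfl
          rw [K.range_orderEmbOfFin rfl, Finset.mem_coe, mem_filter, not_and, not_not] at hk
          rw [hk (mem_univ k), mul_zero]
      _ = 0 := hAu _ (a.2.trans_le htr)
  have hc0 := K.orderEmbOfFin_mem rfl ⟨0, ht⟩
  exact (mem_filter.mp hc0).2 (congrFun (eq_zero_of_mulVec_eq_zero hdet hker) ⟨0, ht⟩)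

lemma mulVec_col_mem_dualE {A : Matrix (Fin s) (Fin h) F} {C : Fin s → Submodule F (Fin m → F)}
    {x : Fin h × Fin m → F} (hx : x ∈ dualE (mpcSet (fun i => (C i : Set (Fin m → F))) A))
    (i : Fin s) : (fun l => (A *ᵥ fun k => x (k, l)) i) ∈ dualE (C i : Set (Fin m → F)) := by
  classical
  intro c hc
  have hp : (fun q : Fin h × Fin m => A i q.1 * c q.2) ∈
      mpcSet (fun i => (C i : Set (Fin m → F))) A := by
    refine ⟨Pi.single i c, fun j => ?_, fun q => ?_⟩
    · by_cases hj : j = i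
      · subst hj; simpa using hc
      · simp [hj]
    · simp [Pi.single_apply, ite_apply, mul_ite]
  have hxp := hx _ hp
  rw [Fintype.sum_prod_type, sum_comm] at hxp
  refine (sum_congr rfl fun l _ => ?_).trans hxp
  simp only [mulVec, dotProduct, sum_mul]
  exact sum_congr rfl fun k _ => by ring

lemma tensor_mem_dualE_mpcSet {C : Fin s → Set (Fin m → F)} {A : Matrix (Fin s) (Fin h) F}
    {g : Fin h → F} {z : Fin m → F} (hgz : ∀ i, (A *ᵥ g) i = 0 ∨ z ∈ dualE (C i)) :
    (fun q : Fin h × Fin m => g q.1 * z q.2) ∈ dualE (mpcSet C A) := by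
  rintro p ⟨v, hv, hp⟩
  calc ∑ q, g q.1 * z q.2 * p q = ∑ i, (A *ᵥ g) i * ∑ l, z l * v i l := by
        simp only [Fintype.sum_prod_type, hp, mulVec, dotProduct, mul_sum, sum_mul]
        rw [sum_comm]
        conv_rhs => rw [sum_comm]
        refine sum_congr rfl fun l _ => ?_
        rw [sum_comm]
        exact sum_congr rfl fun i _ => sum_congr rfl fun k _ => by ring
    _ = 0 := sum_eq_zero fun i _ => by
        rcases hgz i with h | h
        · rw [h, zero_mul]
        · rw [h (v i) (hv i), mul_zero]

lemma exists_mem_dualE_mpcSet_ne_zero (hsh : s ≤ h) (A : Matrix (Fin s) (Fin h) F)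
    {C : Fin s → Submodule F (Fin m → F)} {i₀ : Fin s} (hC : C i₀ ≠ ⊤) :
    ∃ x ∈ dualE (mpcSet (fun i => (C i : Set (Fin m → F))) A), x ≠ 0 := by
  obtain ⟨z, hz, hz0⟩ := exists_mem_dualE_ne_zero hC
  obtain ⟨g, hg0, hg⟩ := A.exists_ne_zero_mulVec_apply_eq_zero_of_ne (by simpa using hsh) i₀
  refine ⟨fun q => g q.1 * z q.2, tensor_mem_dualE_mpcSet fun i => ?_, fun h0 => ?_⟩
  · by_cases hi : i = i₀
    · exact .inr (hi ▸ hz)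
    · exact .inl (hg i hi)
  · obtain ⟨k, hk⟩ := Function.ne_iff.mp hg0
    obtain ⟨l, hl⟩ := Function.ne_iff.mp hz0
    exact mul_ne_zero hk hl (congrFun h0 (k, l))

lemma le_hammingNorm_of_mem_dualE_mpcSet [DecidableEq F] {A : Matrix (Fin s) (Fin h) F}
    (hA : IsNSC A) {C : Fin s → Submodule F (Fin m → F)} {x : Fin h × Fin m → F}
    (hx : x ∈ dualE (mpcSet (fun i => (C i : Set (Fin m → F))) A)) (hx0 : x ≠ 0) :
    s + 1 ≤ hammingNorm x ∨
      ∃ i : Fin s,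
        ((i : ℕ) + 1) * dminS (dualE (C i : Set (Fin m → F))) ≤ hammingNorm x := by
  set y : Fin s → Fin m → F := fun i l => (A *ᵥ fun k => x (k, l)) i
  by_cases hy : ∀ i, y i = 0
  · left
    obtain ⟨⟨k, l⟩, hkl⟩ := Function.ne_iff.mp hx0
    have hcol : s < hammingNorm fun k => x (k, l) :=
      hA.lt_hammingNorm le_rfl (Function.ne_iff.mpr ⟨k, hkl⟩) fun i _ => congrFun (hy i) l
    have := mul_card_le_hammingNorm (x := x) (S := {l}) (r := s + 1) (by simpa using hcol)
    rwa [card_singleton, mul_one] at this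
  · right
    push Not at hy
    obtain ⟨j, hj, hjmin⟩ := wellFounded_lt.has_min {i | y i ≠ 0} hy
    refine ⟨j, ?_⟩
    have hcol : ∀ l ∈ ({l | y j l ≠ 0} : Finset (Fin m)),
        (j : ℕ) + 1 ≤ hammingNorm fun k => x (k, l) := by
      intro l hl
      refine hA.lt_hammingNorm j.2.le (fun h0 => ?_) fun i hi => ?_
      · simp [y, h0] at hl
      · by_contra hne
        exact hjmin i (fun h0 => hne (congrFun h0 l)) hi
    calc ((j : ℕ) + 1) * dminS (dualE (C j : Set (Fin m → F)))
        ≤ ((j : ℕ) + 1) * hammingNorm (y j) :=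
          Nat.mul_le_mul_left _ (dminS_le_hammingNorm (mulVec_col_mem_dualE hx j) hj)
      _ ≤ hammingNorm x := mul_card_le_hammingNorm hcol

end MatrixProductCode

theorem stmt15_general {F : Type*} [Field F] [DecidableEq F] {s h m : ℕ}
    (hs : 0 < s) (hsh : s ≤ h)
    (A : Matrix (Fin s) (Fin h) F) (hA : IsNSC A)
    (C : Fin s → Submodule F (Fin m → F))
    (hprop : ∀ i, C i ≠ ⊤) :
    sInf ({s + 1} ∪
        { v | ∃ i : Fin s, v = ((i : ℕ) + 1) * dminS (dualE ((C i : Set (Fin m → F)))) })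
      ≤ dminS (dualE (mpcSet (fun i => (C i : Set (Fin m → F))) A)) := by
  obtain ⟨x, hx, hx0, hxd⟩ :=
    exists_hammingNorm_eq_dminS (exists_mem_dualE_mpcSet_ne_zero hsh A (hprop ⟨0, hs⟩))
  rw [← hxd]
  rcases le_hammingNorm_of_mem_dualE_mpcSet hA hx hx0 with hle | ⟨i, hle⟩
  · exact (Nat.sInf_le (Or.inl rfl)).trans hle
  · exact (Nat.sInf_le (Or.inr ⟨i, rfl⟩)).trans hle

/-- lower bound for the minimum distance of the Euclidean dual of a
matrix-product code with NSC matrix `A`. -/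
theorem stmt15 {F : Type*} [Field F] [Fintype F] [DecidableEq F] {s h m : ℕ}
    (hs : 0 < s) (hsh : s ≤ h)
    (A : Matrix (Fin s) (Fin h) F) (hA : IsNSC A)
    (C : Fin s → Submodule F (Fin m → F))
    (hnz : ∀ i, C i ≠ ⊥) (hprop : ∀ i, C i ≠ ⊤) :
    sInf ({s + 1} ∪
        { v | ∃ i : Fin s, v = ((i : ℕ) + 1) * dminS (dualE ((C i : Set (Fin m → F)))) })
      ≤ dminS (dualE (mpcSet (fun i => (C i : Set (Fin m → F))) A)) :=
  stmt15_general hs hsh A hA C hprop
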